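/- Let f be a piecewise λ-contraction on a compact metric space X whose open balls are connected. If Ω(f) ∩ S(f) = ∅, then f is asymptotically periodic on the set Z(f) of regular points: ω(f, Z(f)) is a finite union of periodic orbits of f. -/

import Mathlib

/-- Composition `φ^α` along the word `α`. -/
def compIFS {X : Type*} {N : ℕ} (φ : Fin N → X → X) (α : ℕ → Fin N) : ℕ → X → X
  | 0 => id
  | n + 1 => φ (α n) ∘ compIFS φ α n

/-- `Ω(f)` with base point `x₀`. -/
def OmegaIFS {X : Type*} [TopologicalSpace X] {N : ℕ}
    (f : X → X) (A : Fin N → Set X) (φ : Fin N → X → X) (x₀ : X) : Set X :=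
  ⋂ m : ℕ, closure (⋃ n ∈ Set.Ici m,
    ⋃ α ∈ {α : ℕ → Fin N | ∃ x, ∀ j < n, f^[j] x ∈ A (α j)},
      ({compIFS φ α n x₀} : Set X))

/-- The ω-limit set of `x` under `f`. -/
def omegaSet {X : Type*} [TopologicalSpace X] (f : X → X) (x : X) : Set X :=
  ⋂ m : ℕ, closure (⋃ n ∈ Set.Ici m, ({f^[n] x} : Set X))

/-- `γ` is a periodic orbit of `f`. -/
def IsPeriodicOrbit {X : Type*} (f : X → X) (γ : Set X) : Prop :=
  ∃ (x : X) (p : ℕ), 0 < p ∧ f^[p] x = x ∧ γ = {y | ∃ n : ℕ, f^[n] x = y}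


/-!
Near `Ω(f)` the map `f` is a genuine `λ`-contraction at a fixed small scale: a compact
neighbourhood `G` of `Ω(f)` still avoids `S(f)`, so by a Lebesgue number argument any two points
closer than some `r`, one of them in `G`, lie in a common piece. A regular point follows the
coded orbit `φ^α(x₀)` up to an error `λⁿ d(x, x₀)`, so its orbit eventually enters `G`.
Once there, compactness yields two iterates closer than `r`, say at times `m` and `m + p`;
contraction makes `j ↦ f^{m+pj}(x)` Cauchy, its limit is a point of period `p`, and the orbit
of `x` is asymptotic to its orbit. Finally, contraction forces two periodic points of `G`
closer than `r` to coincide, so only finitely many periodic orbits occur.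
-/

open Metric Set Filter Function Topology
open scoped NNReal

def ContractingNear {X : Type*} [PseudoMetricSpace X] (f : X → X) (G : Set X) (r : ℝ)
    (K : ℝ≥0) : Prop :=
  ∀ z ∈ G, ∀ w, dist z w < r → dist (f z) (f w) ≤ K * dist z w

theorem isPeriodicOrbit_range_iterate {X : Type*} {f : X → X} {w : X} (hw : w ∈ periodicPts f) :
    IsPeriodicOrbit f (range fun n => f^[n] w) := by
  obtain ⟨p, hp, hwp⟩ := mem_periodicPts.1 hw
  exact ⟨w, p, hp, hwp, rfl⟩

section OmegaLimit

variable {X : Type*}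

theorem mem_omegaSet_iff_mapClusterPt [TopologicalSpace X] {f : X → X} {x z : X} :
    z ∈ omegaSet f x ↔ MapClusterPt z atTop (fun n => f^[n] x) := by
  simp only [omegaSet, mem_iInter, mapClusterPt_atTop_iff_forall_mem_closure, image_eq_iUnion]

theorem omegaSet_iterate [TopologicalSpace X] (f : X → X) (m : ℕ) (x : X) :
    omegaSet f (f^[m] x) = omegaSet f x := by
  ext z
  simp only [mem_omegaSet_iff_mapClusterPt, ← iterate_add_apply]
  exact (mapClusterPt_comp (φ := (· + m)) (u := fun n => f^[n] x)).trans
    (by rw [map_add_atTop_eq_nat])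

theorem MapClusterPt.of_tendsto_dist [PseudoMetricSpace X] {ι : Type*} {F : Filter ι}
    {u v : ι → X} {z : X} (hu : MapClusterPt z F u)
    (huv : Tendsto (fun i => dist (u i) (v i)) F (𝓝 0)) : MapClusterPt z F v := by
  refine mapClusterPt_iff_frequently.2 fun s hs => ?_
  obtain ⟨ε, hε, hεs⟩ := Metric.mem_nhds_iff.1 hs
  have hclose := (tendsto_order.1 huv).2 (ε / 2) (half_pos hε)
  refine (hu.frequently (ball_mem_nhds z (half_pos hε))).mp (hclose.mono fun i hi hui => hεs ?_)
  calc dist (v i) z ≤ dist (v i) (u i) + dist (u i) z := dist_triangle _ _ _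
    _ < ε / 2 + ε / 2 := add_lt_add (by rwa [dist_comm]) hui
    _ = ε := add_halves ε

theorem omegaSet_eq_of_tendsto_dist [PseudoMetricSpace X] {f : X → X} {x y : X}
    (h : Tendsto (fun n => dist (f^[n] x) (f^[n] y)) atTop (𝓝 0)) :
    omegaSet f x = omegaSet f y := by
  have h' : Tendsto (fun n => dist (f^[n] y) (f^[n] x)) atTop (𝓝 0) := by
    simpa only [dist_comm] using h
  ext z
  simp only [mem_omegaSet_iff_mapClusterPt]
  exact ⟨fun hx => hx.of_tendsto_dist h, fun hy => hy.of_tendsto_dist h'⟩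

theorem Function.IsPeriodicPt.omegaSet_eq_range [TopologicalSpace X] [T1Space X] {f : X → X}
    {p : ℕ} {w : X} (hw : IsPeriodicPt f p w) (hp : 0 < p) :
    omegaSet f w = range fun n => f^[n] w := by
  have hfin : (range fun n => f^[n] w).Finite :=
    ((finite_Iio p).image fun n => f^[n] w).subset <| by
      rintro _ ⟨n, rfl⟩
      exact ⟨n % p, Nat.mod_lt n hp, hw.iterate_mod_apply n⟩
  refine Subset.antisymm (fun z hz => ?_) ?_
  · rw [mem_omegaSet_iff_mapClusterPt, mapClusterPt_atTop_iff_forall_mem_closure] at hz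
    rw [← hfin.isClosed.closure_eq]
    exact closure_mono (image_subset_range _ _) (hz 0)
  · rintro _ ⟨s, rfl⟩
    have hsub : Tendsto (fun j => s + p * j) atTop atTop :=
      tendsto_atTop_mono (fun j => le_add_left (Nat.le_mul_of_pos_left j hp)) tendsto_id
    have hconst : (fun n => f^[n] w) ∘ (fun j => s + p * j) = fun _ => f^[s] w :=
      funext fun j => by simp only [comp_apply, iterate_add_apply, (hw.mul_const j).eq]
    rw [mem_omegaSet_iff_mapClusterPt]
    exact MapClusterPt.of_comp hsub (hconst ▸ tendsto_const_nhds.mapClusterPt)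

end OmegaLimit

theorem exists_lt_dist_lt_of_compactSpace {X : Type*} [PseudoMetricSpace X] [CompactSpace X]
    (u : ℕ → X) {ε : ℝ} (hε : 0 < ε) : ∃ m n, m < n ∧ dist (u m) (u n) < ε := by
  obtain ⟨a, -, ψ, hψ, hlim⟩ := isCompact_univ.tendsto_subseq fun n => mem_univ (u n)
  obtain ⟨N, hN⟩ := Metric.cauchySeq_iff'.1 hlim.cauchySeq ε hε
  exact ⟨ψ N, ψ (N + 1), hψ N.lt_succ_self, by rw [dist_comm]; exact hN (N + 1) N.le_succ⟩

namespace ContractingNear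

variable {X : Type*} {f : X → X} {G : Set X} {r : ℝ} {K : ℝ≥0}

section Pseudo

variable [PseudoMetricSpace X]

theorem dist_iterate_le (hf : ContractingNear f G r K) (hK : K ≤ 1) {z w : X}
    (hz : ∀ n, f^[n] z ∈ G) (hzw : dist z w < r) (n : ℕ) :
    dist (f^[n] z) (f^[n] w) ≤ K ^ n * dist z w := by
  have hK' : (K : ℝ) ≤ 1 := hK
  induction n with
  | zero => simp
  | succ n ih =>
    have hn : dist (f^[n] z) (f^[n] w) < r := ih.trans_lt <|
      (mul_le_of_le_one_left dist_nonneg (pow_le_one₀ K.coe_nonneg hK')).trans_lt hzw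
    rw [iterate_succ_apply', iterate_succ_apply', pow_succ', mul_assoc]
    exact (hf _ (hz n) _ hn).trans (mul_le_mul_of_nonneg_left ih K.coe_nonneg)

theorem dist_iterate_le_dist (hf : ContractingNear f G r K) (hK : K ≤ 1) {z w : X}
    (hz : ∀ n, f^[n] z ∈ G) (hzw : dist z w < r) (n : ℕ) :
    dist (f^[n] z) (f^[n] w) ≤ dist z w :=
  (hf.dist_iterate_le hK hz hzw n).trans <|
    mul_le_of_le_one_left dist_nonneg (pow_le_one₀ K.coe_nonneg (by exact_mod_cast hK))

theorem tendsto_dist_iterate (hf : ContractingNear f G r K) (hK : K < 1) {z w : X}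
    (hz : ∀ n, f^[n] z ∈ G) (hzw : dist z w < r) :
    Tendsto (fun n => dist (f^[n] z) (f^[n] w)) atTop (𝓝 0) := by
  have hpow : Tendsto (fun n => (K : ℝ) ^ n * dist z w) atTop (𝓝 0) := by
    simpa using (tendsto_pow_atTop_nhds_zero_of_lt_one K.coe_nonneg hK).mul_const (dist z w)
  exact squeeze_zero (fun _ => dist_nonneg) (hf.dist_iterate_le hK.le hz hzw) hpow

theorem tendsto_iterate (hf : ContractingNear f G r K) (hK : K ≤ 1) (hr : 0 < r) {ι : Type*}
    {l : Filter ι} {u : ι → X} {w : X} (hu : ∀ i n, f^[n] (u i) ∈ G)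
    (huw : Tendsto u l (𝓝 w)) (n : ℕ) : Tendsto (fun i => f^[n] (u i)) l (𝓝 (f^[n] w)) := by
  rw [tendsto_iff_dist_tendsto_zero] at huw ⊢
  have hnear : ∀ᶠ i in l, dist (u i) w < r := (tendsto_order.1 huw).2 r hr
  exact squeeze_zero' (.of_forall fun _ => dist_nonneg)
    (hnear.mono fun i hi => hf.dist_iterate_le_dist hK (hu i) hi n) huw

theorem exists_tendsto_iterate_mul [CompleteSpace X] (hf : ContractingNear f G r K) (hK : K < 1)
    {z : X} {p : ℕ} (hp : 0 < p) (hz : ∀ n, f^[n] z ∈ G) (hzp : dist z (f^[p] z) < r) :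
    ∃ w, Tendsto (fun j => f^[p * j] z) atTop (𝓝 w) := by
  refine cauchySeq_tendsto_of_complete <| cauchySeq_of_le_geometric ((K : ℝ) ^ p)
    (dist z (f^[p] z)) (pow_lt_one₀ K.coe_nonneg hK hp.ne') fun j => ?_
  calc dist (f^[p * j] z) (f^[p * (j + 1)] z) = dist (f^[p * j] z) (f^[p * j] (f^[p] z)) := by
        rw [mul_add_one, iterate_add_apply]
    _ ≤ K ^ (p * j) * dist z (f^[p] z) := hf.dist_iterate_le hK.le hz hzp (p * j)
    _ = dist z (f^[p] z) * ((K : ℝ) ^ p) ^ j := by rw [pow_mul, mul_comm]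

end Pseudo

variable [MetricSpace X]

theorem eq_of_isPeriodicPt (hf : ContractingNear f G r K) (hK : K < 1) {z w : X}
    (hz : ∀ n, f^[n] z ∈ G) (hzw : dist z w < r) {p q : ℕ} (hzp : IsPeriodicPt f p z)
    (hp : 0 < p) (hwq : IsPeriodicPt f q w) (hq : 0 < q) : z = w := by
  by_contra hne
  have hd : 0 < dist z w := dist_pos.2 hne
  have h := hf.dist_iterate_le hK.le hz hzw (p * q)
  rw [(hzp.mul_const q).eq, (hwq.const_mul p).eq] at h
  have hpow : (K : ℝ) ^ (p * q) < 1 := pow_lt_one₀ K.coe_nonneg hK (by positivity)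
  nlinarith

theorem finite_periodicPts [CompactSpace X] (hf : ContractingNear f G r K) (hK : K < 1)
    (hr : 0 < r) : {z | (∀ n, f^[n] z ∈ G) ∧ z ∈ periodicPts f}.Finite := by
  set P := {z | (∀ n, f^[n] z ∈ G) ∧ z ∈ periodicPts f}
  obtain ⟨t, -, ht, hcover⟩ :=
    finite_cover_balls_of_compact (isCompact_univ (X := X)) (half_pos hr)
  have hP : P ⊆ ⋃ c ∈ t, P ∩ ball c (r / 2) := fun z hz =>
    have ⟨c, hc, hzc⟩ := mem_iUnion₂.1 (hcover (mem_univ z))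
    mem_biUnion hc ⟨hz, hzc⟩
  refine (ht.biUnion fun c _ => Subsingleton.finite ?_).subset hP
  rintro z ⟨⟨hzG, hzP⟩, hzc⟩ w ⟨⟨-, hwP⟩, hwc⟩
  obtain ⟨p, hp, hzp⟩ := mem_periodicPts.1 hzP
  obtain ⟨q, hq, hwq⟩ := mem_periodicPts.1 hwP
  refine hf.eq_of_isPeriodicPt hK hzG ?_ hzp hp hwq hq
  calc dist z w ≤ dist z c + dist w c := dist_triangle_right _ _ _
    _ < r / 2 + r / 2 := add_lt_add hzc hwc
    _ = r := add_halves r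

theorem exists_isPeriodicPt_omegaSet_eq [CompleteSpace X] (hf : ContractingNear f G r K)
    (hK : K < 1) (hr : 0 < r) (hG : IsClosed G) {z : X} {p : ℕ} (hp : 0 < p)
    (hz : ∀ n, f^[n] z ∈ G) (hzp : dist z (f^[p] z) < r) :
    ∃ w, (∀ n, f^[n] w ∈ G) ∧ IsPeriodicPt f p w ∧
      omegaSet f z = range fun n => f^[n] w := by
  obtain ⟨w, hw⟩ := hf.exists_tendsto_iterate_mul hK hp hz hzp
  have hu : ∀ j n, f^[n] (f^[p * j] z) ∈ G := fun j n => by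
    rw [← iterate_add_apply]; exact hz _
  have hwG : ∀ n, f^[n] w ∈ G := fun n =>
    hG.mem_of_tendsto (hf.tendsto_iterate hK.le hr hu hw n) (.of_forall fun j => hu j n)
  have hwp : IsPeriodicPt f p w := by
    refine tendsto_nhds_unique (hf.tendsto_iterate hK.le hr hu hw p) ?_
    simpa only [comp_def, ← iterate_add_apply, mul_add_one, add_comm p]
      using hw.comp (tendsto_add_atTop_nat 1)
  obtain ⟨J, hJ⟩ := ((tendsto_order.1 (tendsto_iff_dist_tendsto_zero.1 hw)).2 r hr).exists
  refine ⟨w, hwG, hwp, ?_⟩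
  rw [← omegaSet_iterate f (p * J),
    omegaSet_eq_of_tendsto_dist (hf.tendsto_dist_iterate hK (hu J) hJ), hwp.omegaSet_eq_range hp]

theorem exists_omegaSet_eq_range [CompactSpace X] (hf : ContractingNear f G r K) (hK : K < 1)
    (hr : 0 < r) (hG : IsClosed G) {x : X} (hx : ∀ᶠ n in atTop, f^[n] x ∈ G) :
    ∃ w, (∀ n, f^[n] w ∈ G) ∧ w ∈ periodicPts f ∧
      omegaSet f x = range fun n => f^[n] w := by
  obtain ⟨M, hM⟩ := eventually_atTop.1 hx
  obtain ⟨m, n, hmn, hdist⟩ := exists_lt_dist_lt_of_compactSpace (fun n => f^[n + M] x) hr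
  have hz : ∀ k, f^[k] (f^[m + M] x) ∈ G := fun k => by
    rw [← iterate_add_apply]; exact hM _ (by omega)
  have hzp : dist (f^[m + M] x) (f^[n - m] (f^[m + M] x)) < r := by
    rwa [← iterate_add_apply, show n - m + (m + M) = n + M by omega]
  obtain ⟨w, hwG, hwp, hω⟩ :=
    hf.exists_isPeriodicPt_omegaSet_eq hK hr hG (Nat.sub_pos_of_lt hmn) hz hzp
  exact ⟨w, hwG, mem_periodicPts.2 ⟨_, Nat.sub_pos_of_lt hmn, hwp⟩,
    by rw [← omegaSet_iterate f (m + M), hω]⟩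

end ContractingNear

theorem contractingNear_of_eqOn_lipschitzWith {X ι : Type*} [PseudoMetricSpace X] {f : X → X}
    {A : ι → Set X} {φ : ι → X → X} {K : ℝ≥0} {G : Set X} (hG : IsCompact G)
    (hGA : G ⊆ ⋃ i, A i) (hopen : ∀ i, IsOpen (A i)) (hlip : ∀ i, LipschitzWith K (φ i))
    (heq : ∀ i, EqOn f (φ i) (A i)) : ∃ r > 0, ContractingNear f G r K := by
  obtain ⟨r, hr, hball⟩ := lebesgue_number_lemma_of_metric hG hopen hGA
  refine ⟨r, hr, fun z hz w hzw => ?_⟩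
  obtain ⟨i, hi⟩ := hball z hz
  rw [heq i (hi (mem_ball_self hr)), heq i (hi (mem_ball'.2 hzw))]
  exact (hlip i).dist_le_mul z w

section IFS

variable {X : Type*} {N : ℕ} {φ : Fin N → X → X}

theorem lipschitzWith_compIFS [PseudoEMetricSpace X] {K : ℝ≥0}
    (hlip : ∀ i, LipschitzWith K (φ i)) (α : ℕ → Fin N) (n : ℕ) :
    LipschitzWith (K ^ n) (compIFS φ α n) := by
  induction n with
  | zero => exact LipschitzWith.id
  | succ n ih => rw [pow_succ']; exact (hlip (α n)).comp ih

theorem iterate_eq_compIFS {f : X → X} {A : Fin N → Set X} (heq : ∀ i, EqOn f (φ i) (A i))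
    {α : ℕ → Fin N} {x : X} (hα : ∀ j, f^[j] x ∈ A (α j)) (n : ℕ) :
    f^[n] x = compIFS φ α n x := by
  induction n with
  | zero => rfl
  | succ n ih =>
    rw [iterate_succ_apply', heq (α n) (hα n), ih]
    rfl

theorem eventually_compIFS_mem_of_omegaIFS_subset [TopologicalSpace X] [CompactSpace X]
    (f : X → X) (A : Fin N → Set X) (x₀ : X) {α : ℕ → Fin N} {x : X}
    (hα : ∀ j, f^[j] x ∈ A (α j)) {U : Set X} (hU : IsOpen U)
    (hΩU : OmegaIFS f A φ x₀ ⊆ U) : ∀ᶠ n in atTop, compIFS φ α n x₀ ∈ U := by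
  -- `OmegaIFS f A φ x₀ = ⋂ m, V m` by definition
  set V : ℕ → Set X := fun m => closure (⋃ n ∈ Ici m,
    ⋃ α ∈ {α : ℕ → Fin N | ∃ x, ∀ j < n, f^[j] x ∈ A (α j)},
      ({compIFS φ α n x₀} : Set X))
  have hV : Antitone V := fun m m' h =>
    closure_mono <| biUnion_subset_biUnion_left fun n hn => le_trans h hn
  obtain ⟨m, hm⟩ := exists_subset_nhds_of_isCompact' hV.directed_ge
    (fun m => isClosed_closure.isCompact) (fun m => isClosed_closure)
    fun y hy => hU.mem_nhds (hΩU hy)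
  refine eventually_atTop.2 ⟨m, fun n hn => hm (subset_closure ?_)⟩
  exact mem_biUnion hn (mem_biUnion ⟨x, fun j _ => hα j⟩ (mem_singleton _))

theorem eventually_iterate_mem_thickening_omegaIFS [MetricSpace X] [CompactSpace X]
    {f : X → X} {A : Fin N → Set X} {K : ℝ≥0} (hK : K < 1)
    (hlip : ∀ i, LipschitzWith K (φ i)) (heq : ∀ i, EqOn f (φ i) (A i)) (x₀ : X) {x : X}
    (hx : ∀ m, f^[m] x ∈ ⋃ i, A i) {δ : ℝ} (hδ : 0 < δ) :
    ∀ᶠ n in atTop, f^[n] x ∈ thickening δ (OmegaIFS f A φ x₀) := by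
  choose α hα using fun j => mem_iUnion.1 (hx j)
  have hpow : Tendsto (fun n => (K : ℝ) ^ n * dist x x₀) atTop (𝓝 0) := by
    simpa using (tendsto_pow_atTop_nhds_zero_of_lt_one K.coe_nonneg hK).mul_const (dist x x₀)
  have hclose : ∀ᶠ n in atTop, dist (f^[n] x) (compIFS φ α n x₀) < δ / 2 := by
    filter_upwards [(tendsto_order.1 hpow).2 _ (half_pos hδ)] with n hn
    rw [iterate_eq_compIFS heq hα n]
    exact ((lipschitzWith_compIFS hlip α n).dist_le_mul x x₀).trans_lt (by push_cast; exact hn)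
  filter_upwards [hclose, eventually_compIFS_mem_of_omegaIFS_subset f A x₀ hα isOpen_thickening
    (self_subset_thickening (half_pos hδ) _)] with n hn hc
  simpa only [add_halves] using
    thickening_thickening_subset (δ / 2) (δ / 2) _ (mem_thickening_iff.2 ⟨_, hc, hn⟩)

end IFS

theorem asymptotically_periodic_on_regular_points_general
    {X : Type*} [MetricSpace X] [CompactSpace X]
    (f : X → X) (N : ℕ) (A : Fin N → Set X) (φ : Fin N → X → X)
    (lam : NNReal) (hlam : lam < 1)
    (hopen : ∀ i, IsOpen (A i))
    (hlip : ∀ i, LipschitzWith lam (φ i))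
    (heq : ∀ i, Set.EqOn f (φ i) (A i))
    (x₀ : X)
    (hΩS : OmegaIFS f A φ x₀ ∩ (⋃ i, A i)ᶜ = ∅) :
    ∃ (r : ℕ) (γ : Fin r → Set X),
      (∀ k, IsPeriodicOrbit f (γ k)) ∧
      (⋃ x ∈ {x : X | ∀ m : ℕ, f^[m] x ∈ ⋃ i, A i}, omegaSet f x) = ⋃ k, γ k := by
  set Z := {x : X | ∀ m : ℕ, f^[m] x ∈ ⋃ i, A i}
  have hΩA : OmegaIFS f A φ x₀ ⊆ ⋃ i, A i := sdiff_eq_empty.1 hΩS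
  obtain ⟨δ, hδ, hδA⟩ := (isClosed_iInter fun _ => isClosed_closure).isCompact
    |>.exists_cthickening_subset_open (isOpen_iUnion hopen) hΩA
  obtain ⟨r, hr, hf⟩ :=
    contractingNear_of_eqOn_lipschitzWith isClosed_cthickening.isCompact hδA hopen hlip heq
  have hω : ∀ x ∈ Z, ∃ w, (∀ n, f^[n] w ∈ cthickening δ (OmegaIFS f A φ x₀)) ∧
      w ∈ periodicPts f ∧ omegaSet f x = range fun n => f^[n] w := fun x hx =>
    hf.exists_omegaSet_eq_range hlam hr isClosed_cthickening <|
      (eventually_iterate_mem_thickening_omegaIFS hlam hlip heq x₀ hx hδ).mono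
        fun _ hn => thickening_subset_cthickening _ _ hn
  have hfin : (omegaSet f '' Z).Finite :=
    ((hf.finite_periodicPts hlam hr).image fun w => range fun n => f^[n] w).subset <| by
      rintro _ ⟨x, hx, rfl⟩
      obtain ⟨w, hwG, hwp, hxw⟩ := hω x hx
      exact ⟨w, ⟨hwG, hwp⟩, hxw.symm⟩
  obtain ⟨k, γ, -, hγ⟩ := hfin.fin_param
  refine ⟨k, γ, fun i => ?_, by rw [← sUnion_image, ← hγ, sUnion_range]⟩
  obtain ⟨x, hx, hxi⟩ : γ i ∈ omegaSet f '' Z := hγ ▸ mem_range_self i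
  obtain ⟨w, -, hwp, hxw⟩ := hω x hx
  rw [← hxi, hxw]
  exact isPeriodicOrbit_range_iterate hwp

/-- if `Ω(f) ∩ S(f) = ∅`, then `f` is asymptotically periodic on the set
`Z(f)` of regular points: `ω(f, Z(f))` is a finite union of periodic orbits of `f`. -/
theorem asymptotically_periodic_on_regular_points
    {X : Type*} [MetricSpace X] [CompactSpace X]
    (hball : ∀ (x : X) (r : ℝ), IsPreconnected (Metric.ball x r))
    (f : X → X) (N : ℕ) (A : Fin N → Set X) (φ : Fin N → X → X)
    (lam : NNReal) (hlam0 : 0 < lam) (hlam : lam < 1)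
    (hopen : ∀ i, IsOpen (A i))
    (hconn : ∀ i, IsConnected (A i))
    (hdisj : ∀ i j, i ≠ j → Disjoint (A i) (A j))
    (hdense : Dense (⋃ i, A i))
    (hlip : ∀ i, LipschitzWith lam (φ i))
    (hbilip : ∀ i, ∃ K : NNReal, AntilipschitzWith K (φ i))
    (heq : ∀ i, Set.EqOn f (φ i) (A i))
    (x₀ : X)
    (hΩS : OmegaIFS f A φ x₀ ∩ (⋃ i, A i)ᶜ = ∅) :
    ∃ (r : ℕ) (γ : Fin r → Set X),
      (∀ k, IsPeriodicOrbit f (γ k)) ∧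
      (⋃ x ∈ {x : X | ∀ m : ℕ, f^[m] x ∈ ⋃ i, A i}, omegaSet f x) = ⋃ k, γ k :=
  asymptotically_periodic_on_regular_points_general f N A φ lam hlam hopen hlip heq x₀ hΩS
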